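/- Strong unique continuation at infinity: let $u$ be a smooth solution of $\partial_t u = \mathcal{L}_\phi u$ on $M \times [a,\infty)$, $M$ a closed manifold. If $u$ vanishes to infinite order at infinity, i.e., $\lim_{t\to\infty} e^{ct} I(t) = 0$ for every constant $c > 0$, then $u \equiv 0$. -/

import Mathlib

/-!
Set `I = ∫ u²`, `B = ∫ u 𝓛u` and `C = ∫ (𝓛u)²`. The heat equation and the self-adjointness of
`𝓛` give `I' = 2B` and `B' = 2C`, while Cauchy–Schwarz gives `B² ≤ I C`. Hence, as long as `I > 0`,
the frequency `B / I` is nondecreasing, so `log I` grows at least linearly with slope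
`2 B(t₀) / I(t₀)`: `I(t) ≥ I(t₀) e^{2 B(t₀)/I(t₀) (t - t₀)}`. This lower bound also prevents `I`
from reaching zero after `t₀`, and it is incompatible with `e^{ct} I(t) → 0` for large `c`.
-/

open MeasureTheory Filter Set Real
open scoped RealInnerProductSpace Topology

theorem sq_integral_mul_le_integral_sq_mul_integral_sq {M : Type*} [MeasurableSpace M]
    {μ : Measure M} {f g : M → ℝ} (hf : Integrable (fun x => f x ^ 2) μ)
    (hg : Integrable (fun x => g x ^ 2) μ) (hfg : Integrable (fun x => f x * g x) μ) :
    (∫ x, f x * g x ∂μ) ^ 2 ≤ (∫ x, f x ^ 2 ∂μ) * ∫ x, g x ^ 2 ∂μ := by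
  have hquad : ∀ r : ℝ,
      0 ≤ (∫ x, g x ^ 2 ∂μ) * (r * r) + 2 * (∫ x, f x * g x ∂μ) * r + ∫ x, f x ^ 2 ∂μ := by
    intro r
    have hg' := hg.const_mul (r ^ 2)
    have hfg' := hfg.const_mul (2 * r)
    calc 0 ≤ ∫ x, (r * g x + f x) ^ 2 ∂μ := integral_nonneg fun x => sq_nonneg _
      _ = ∫ x, (r ^ 2 * g x ^ 2 + 2 * r * (f x * g x) + f x ^ 2) ∂μ := by
          congr 1; funext x; ring
      _ = _ := by
          rw [integral_add (f := fun x => r ^ 2 * g x ^ 2 + 2 * r * (f x * g x)) (hg'.add hfg') hf,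
            integral_add hg' hfg', integral_const_mul, integral_const_mul]
          ring
  have := discrim_le_zero hquad
  rw [discrim] at this
  nlinarith

theorem monotoneOn_Icc_of_hasDerivAt_nonneg {f f' : ℝ → ℝ} {a b : ℝ}
    (hf : ∀ t ∈ Icc a b, HasDerivAt f (f' t) t) (hf' : ∀ t ∈ Ioo a b, 0 ≤ f' t) :
    MonotoneOn f (Icc a b) :=
  monotoneOn_of_hasDerivWithinAt_nonneg (convex_Icc a b)
    (fun t ht => (hf t ht).continuousAt.continuousWithinAt)
    (by simpa only [interior_Icc] using
      fun t ht => (hf t (Ioo_subset_Icc_self ht)).hasDerivWithinAt)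
    (by simpa only [interior_Icc] using hf')

section Frequency

variable {I B C : ℝ → ℝ} {t₀ t₁ : ℝ}

theorem monotoneOn_frequency (hI : ∀ t ∈ Icc t₀ t₁, HasDerivAt I (2 * B t) t)
    (hB : ∀ t ∈ Icc t₀ t₁, HasDerivAt B (2 * C t) t) (hBIC : ∀ t ∈ Icc t₀ t₁, B t ^ 2 ≤ I t * C t)
    (hpos : ∀ t ∈ Icc t₀ t₁, 0 < I t) :
    MonotoneOn (fun t => B t / I t) (Icc t₀ t₁) := by
  refine monotoneOn_Icc_of_hasDerivAt_nonneg
    (fun t ht => (hB t ht).div (hI t ht) (hpos t ht).ne') fun t ht => ?_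
  have := hBIC t (Ioo_subset_Icc_self ht)
  exact div_nonneg (by nlinarith) (sq_nonneg _)

theorem mul_exp_frequency_le (hI : ∀ t ∈ Icc t₀ t₁, HasDerivAt I (2 * B t) t)
    (hB : ∀ t ∈ Icc t₀ t₁, HasDerivAt B (2 * C t) t) (hBIC : ∀ t ∈ Icc t₀ t₁, B t ^ 2 ≤ I t * C t)
    (hpos : ∀ t ∈ Icc t₀ t₁, 0 < I t) (h01 : t₀ ≤ t₁) :
    I t₀ * exp (2 * (B t₀ / I t₀) * (t₁ - t₀)) ≤ I t₁ := by
  set K := B t₀ / I t₀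
  have hfreq := monotoneOn_frequency hI hB hBIC hpos
  have hmono : MonotoneOn (fun t => log (I t) - 2 * K * t) (Icc t₀ t₁) := by
    refine monotoneOn_Icc_of_hasDerivAt_nonneg (fun t ht =>
      ((hI t ht).log (hpos t ht).ne').sub ((hasDerivAt_id t).const_mul (2 * K))) fun t ht => ?_
    have : K ≤ B t / I t := hfreq (left_mem_Icc.2 h01) (Ioo_subset_Icc_self ht) ht.1.le
    rw [mul_div_assoc]
    linarith
  have hlog := hmono (left_mem_Icc.2 h01) (right_mem_Icc.2 h01) h01
  calc I t₀ * exp (2 * K * (t₁ - t₀)) = exp (log (I t₀) + 2 * K * (t₁ - t₀)) := by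
        rw [exp_add, exp_log (hpos t₀ (left_mem_Icc.2 h01))]
    _ ≤ exp (log (I t₁)) := exp_le_exp.2 (by simp only at hlog; linarith)
    _ = I t₁ := exp_log (hpos t₁ (right_mem_Icc.2 h01))

theorem mul_exp_frequency_le_of_forall_ge (hI : ∀ t ∈ Ici t₀, HasDerivAt I (2 * B t) t)
    (hB : ∀ t ∈ Ici t₀, HasDerivAt B (2 * C t) t) (hBIC : ∀ t ∈ Ici t₀, B t ^ 2 ≤ I t * C t)
    (hI0 : ∀ t, 0 ≤ I t) (hpos : 0 < I t₀) :
    ∀ t ∈ Ici t₀, I t₀ * exp (2 * (B t₀ / I t₀) * (t - t₀)) ≤ I t := by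
  have hbound : ∀ t ∈ Ici t₀, (∀ r ∈ Icc t₀ t, 0 < I r) →
      I t₀ * exp (2 * (B t₀ / I t₀) * (t - t₀)) ≤ I t := fun t ht hpos' =>
    mul_exp_frequency_le (fun r hr => hI r hr.1) (fun r hr => hB r hr.1)
      (fun r hr => hBIC r hr.1) hpos' ht
  by_contra! hfail
  -- A failure forces a zero of `I` after `t₀`; the bound passes by continuity to the first zero.
  obtain ⟨t, ht, hIt⟩ : ∃ t ∈ Ici t₀, I t = 0 := by
    by_contra! hne
    obtain ⟨t, ht, hlt⟩ := hfail
    exact hlt.not_ge (hbound t ht fun r hr => (hI0 r).lt_of_ne (hne r hr.1).symm)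
  have hcont : ContinuousOn I (Icc t₀ t) := fun r hr => (hI r hr.1).continuousAt.continuousWithinAt
  obtain ⟨s, ⟨hs, hIs⟩, hmin⟩ := (isCompact_Icc.of_isClosed_subset
    (hcont.preimage_isClosed_of_isClosed isClosed_Icc isClosed_singleton)
    inter_subset_left).exists_isLeast ⟨t, ⟨ht, le_rfl⟩, hIt⟩
  simp only [mem_preimage, mem_singleton_iff] at hIs
  have hpos_before : ∀ r ∈ Ico t₀ s, 0 < I r := fun r hr =>
    (hI0 r).lt_of_ne fun h => hr.2.not_ge (hmin ⟨⟨hr.1, hr.2.le.trans hs.2⟩, h.symm⟩)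
  have hts : t₀ ≠ s := by rintro rfl; exact hpos.ne' hIs
  have hle : I t₀ * exp (2 * (B t₀ / I t₀) * (s - t₀)) ≤ I s := by
    refine le_on_closure (s := Ico t₀ s) (fun r hr => hbound r hr.1 fun q hq =>
      hpos_before q ⟨hq.1, hq.2.trans_lt hr.2⟩) (by fun_prop) ?_ (by simp [closure_Ico hts, hs.1])
    rw [closure_Ico hts]
    exact hcont.mono (Icc_subset_Icc_right hs.2)
  have := mul_pos hpos (exp_pos (2 * (B t₀ / I t₀) * (s - t₀)))
  linarith

end Frequency

theorem exists_not_tendsto_exp_mul_nhds_zero {f : ℝ → ℝ} {A k : ℝ} (hA : 0 < A)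
    (h : ∀ᶠ t in atTop, A * exp (k * t) ≤ f t) :
    ∃ c > 0, ¬Tendsto (fun t => exp (c * t) * f t) atTop (𝓝 0) := by
  refine ⟨|k| + 1, by positivity, fun hlim => ?_⟩
  obtain ⟨t, hft, hsmall, ht⟩ := (h.and <| (hlim.eventually (gt_mem_nhds hA)).and
    (eventually_ge_atTop 0)).exists
  have hexp : 1 ≤ exp ((|k| + 1) * t + k * t) :=
    one_le_exp (by nlinarith [neg_abs_le k])
  have : A * exp ((|k| + 1) * t + k * t) ≤ exp ((|k| + 1) * t) * f t := by
    rw [exp_add, mul_left_comm]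
    exact mul_le_mul_of_nonneg_left hft (exp_pos _).le
  nlinarith

theorem strong_unique_continuation_at_infinity_general
    {M : Type*} [MeasurableSpace M] (μ : Measure M)
    {V : Type*} [NormedAddCommGroup V] [InnerProductSpace ℝ V]
    (a : ℝ)
    (u Lu : ℝ → M → ℝ) (gradu gradLu : ℝ → M → V)
    (hu2 : ∀ t, Integrable (fun x => (u t x) ^ 2) μ)
    (hLu2 : ∀ t, Integrable (fun x => (Lu t x) ^ 2) μ)
    (huLu : ∀ t, Integrable (fun x => u t x * Lu t x) μ)
    -- self-adjointness of 𝓛_φ (integration by parts on the closed manifold)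
    (hibp : ∀ t, ∫ x, u t x * Lu t x ∂μ = -∫ x, ‖gradu t x‖ ^ 2 ∂μ)
    (hibp2 : ∀ t, ∫ x, ⟪gradu t x, gradLu t x⟫ ∂μ = -∫ x, (Lu t x) ^ 2 ∂μ)
    -- differentiation under the integral sign for I and D
    (hDI : ∀ t ∈ Set.Ici a,
      HasDerivAt (fun s => ∫ x, (u s x) ^ 2 ∂μ)
        (∫ x, 2 * (u t x * Lu t x) ∂μ) t)
    (hDD : ∀ t ∈ Set.Ici a,
      HasDerivAt (fun s => -∫ x, ‖gradu s x‖ ^ 2 ∂μ)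
        (-∫ x, 2 * ⟪gradu t x, gradLu t x⟫ ∂μ) t)
    -- u vanishes to infinite order at infinity
    (hvanish : ∀ c : ℝ, 0 < c →
      Tendsto (fun t => Real.exp (c * t) * ∫ x, (u t x) ^ 2 ∂μ) atTop (nhds 0)) :
    ∀ t ∈ Set.Ici a, ∀ᵐ x ∂μ, u t x = 0 := by
  set I : ℝ → ℝ := fun t => ∫ x, (u t x) ^ 2 ∂μ
  set B : ℝ → ℝ := fun t => ∫ x, u t x * Lu t x ∂μ
  set C : ℝ → ℝ := fun t => ∫ x, (Lu t x) ^ 2 ∂μ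
  have hI : ∀ t ∈ Ici a, HasDerivAt I (2 * B t) t := fun t ht => by
    simpa only [integral_const_mul] using hDI t ht
  have hB : ∀ t ∈ Ici a, HasDerivAt B (2 * C t) t := fun t ht => by
    rw [show B = fun s => -∫ x, ‖gradu s x‖ ^ 2 ∂μ from funext hibp]
    convert hDD t ht using 1
    rw [integral_const_mul, hibp2 t]; ring
  have hBIC : ∀ t, B t ^ 2 ≤ I t * C t := fun t =>
    sq_integral_mul_le_integral_sq_mul_integral_sq (hu2 t) (hLu2 t) (huLu t)
  intro t₀ ht₀
  have hI0 : ∀ t, 0 ≤ I t := fun t => integral_nonneg fun x => sq_nonneg _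
  have hIt₀ : I t₀ = 0 := by
    by_contra hne
    have hpos := (hI0 t₀).lt_of_ne (Ne.symm hne)
    have hgrowth := mul_exp_frequency_le_of_forall_ge (fun t ht => hI t (Ici_subset_Ici.2 ht₀ ht))
      (fun t ht => hB t (Ici_subset_Ici.2 ht₀ ht)) (fun t _ => hBIC t) hI0 hpos
    set k := 2 * (B t₀ / I t₀)
    obtain ⟨c, hc, hnot⟩ := exists_not_tendsto_exp_mul_nhds_zero (f := I)
      (mul_pos hpos (exp_pos (-(k * t₀)))) (k := k) <| (eventually_ge_atTop t₀).mono fun t ht => by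
        rw [mul_assoc, ← exp_add]; convert hgrowth t ht using 3; ring
    exact hnot (hvanish c hc)
  filter_upwards [(integral_eq_zero_iff_of_nonneg (fun x => sq_nonneg (u t₀ x)) (hu2 t₀)).1 hIt₀]
    with x hx
  exact pow_eq_zero_iff two_ne_zero |>.1 hx

theorem strong_unique_continuation_at_infinity
    {M : Type*} [MeasurableSpace M] (μ : Measure M) [IsFiniteMeasure μ]
    {V : Type*} [NormedAddCommGroup V] [InnerProductSpace ℝ V]
    (a : ℝ)
    (u Lu : ℝ → M → ℝ) (gradu gradLu : ℝ → M → V)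
    (hu2 : ∀ t, Integrable (fun x => (u t x) ^ 2) μ)
    (hgrad2 : ∀ t, Integrable (fun x => ‖gradu t x‖ ^ 2) μ)
    (hLu2 : ∀ t, Integrable (fun x => (Lu t x) ^ 2) μ)
    (huLu : ∀ t, Integrable (fun x => u t x * Lu t x) μ)
    (hgg : ∀ t, Integrable (fun x => ⟪gradu t x, gradLu t x⟫) μ)
    -- the drift heat equation ∂ₜ u = 𝓛_φ u
    (hheat : ∀ x t, HasDerivAt (fun s => u s x) (Lu t x) t)
    -- self-adjointness of 𝓛_φ (integration by parts on the closed manifold)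
    (hibp : ∀ t, ∫ x, u t x * Lu t x ∂μ = -∫ x, ‖gradu t x‖ ^ 2 ∂μ)
    (hibp2 : ∀ t, ∫ x, ⟪gradu t x, gradLu t x⟫ ∂μ = -∫ x, (Lu t x) ^ 2 ∂μ)
    -- differentiation under the integral sign for I and D
    (hDI : ∀ t ∈ Set.Ici a,
      HasDerivAt (fun s => ∫ x, (u s x) ^ 2 ∂μ)
        (∫ x, 2 * (u t x * Lu t x) ∂μ) t)
    (hDD : ∀ t ∈ Set.Ici a,
      HasDerivAt (fun s => -∫ x, ‖gradu s x‖ ^ 2 ∂μ)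
        (-∫ x, 2 * ⟪gradu t x, gradLu t x⟫ ∂μ) t)
    -- u vanishes to infinite order at infinity
    (hvanish : ∀ c : ℝ, 0 < c →
      Tendsto (fun t => Real.exp (c * t) * ∫ x, (u t x) ^ 2 ∂μ) atTop (nhds 0)) :
    ∀ t ∈ Set.Ici a, ∀ᵐ x ∂μ, u t x = 0 :=
  strong_unique_continuation_at_infinity_general μ a u Lu gradu gradLu hu2 hLu2 huLu hibp hibp2 hDI
    hDD hvanish
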